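/- Let a : D\{0} → ℝ be smooth with Δa(z) ≥ e^{2a(z)} for all 0 < |z| < 1 (i.e. the conformal metric e^{2a}|dz|² on the punctured unit disc has Gauss curvature at most −1; completeness is not assumed). Then for all z with 0 < |z| < 1 one has a(z) ≤ −ln(|z|·(−ln|z|)); equivalently, e^{2a}|dz|² ≤ H, where H = [|z| ln|z|]^{−2}|dz|² is the complete conformal hyperbolic metric on the punctured disc. -/

import Mathlib

open Complex Metric Set Filter

/-- The flat Laplacian of `u : ℂ → ℝ` at `z`, i.e. `∂²u/∂x² + ∂²u/∂y²`. -/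
noncomputable def lap (u : ℂ → ℝ) (z : ℂ) : ℝ :=
  iteratedFDeriv ℝ 2 u z ![1, 1] + iteratedFDeriv ℝ 2 u z ![Complex.I, Complex.I]

lemma lemA1 (f : ℂ → ℝ) (U : Set ℂ) (hU : IsOpen U) (hf : ContDiffOn ℝ 2 f U)
    (z e : ℂ) (t : ℝ) (ht : z + t • e ∈ U) :
    HasDerivAt (fun t : ℝ => f (z + t • e)) (fderiv ℝ f (z + t • e) e) t := by
  have hd : DifferentiableAt ℝ f (z + t • e) :=
    (hf.differentiableOn (by norm_num)).differentiableAt (hU.mem_nhds ht)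
  have hφ : HasDerivAt (fun t : ℝ => z + t • e) e t := by
    simpa using ((hasDerivAt_id t).smul_const e).const_add z
  exact hd.hasFDerivAt.comp_hasDerivAt t hφ

lemma lemA2 (f : ℂ → ℝ) (U : Set ℂ) (hU : IsOpen U) (hf : ContDiffOn ℝ 2 f U)
    (z e : ℂ) (hz : z ∈ U) :
    HasDerivAt (fun t : ℝ => fderiv ℝ f (z + t • e) e)
      (iteratedFDeriv ℝ 2 f z ![e, e]) 0 := by
  have hca : ContDiffAt ℝ 2 f z := hf.contDiffAt (hU.mem_nhds hz)
  have hd2 : DifferentiableAt ℝ (fderiv ℝ f) z :=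
    (hca.fderiv_right (m := 1) le_rfl).differentiableAt (by norm_num)
  have hφ : HasDerivAt (fun t : ℝ => z + t • e) e 0 := by
    simpa using ((hasDerivAt_id (0:ℝ)).smul_const e).const_add z
  have hd2' : HasFDerivAt (fderiv ℝ f) (fderiv ℝ (fderiv ℝ f) z) (z + (0:ℝ) • e) := by
    simpa using hd2.hasFDerivAt
  have h1 : HasDerivAt (fun t : ℝ => fderiv ℝ f (z + t • e))
      (fderiv ℝ (fderiv ℝ f) z e) 0 := by
    have := hd2'.comp_hasDerivAt 0 hφ
    exact this
  have h2 := h1.clm_apply (hasDerivAt_const (0:ℝ) e)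
  rw [iteratedFDeriv_two_apply]
  simpa using h2

lemma lemB1 {g g₁ : ℝ → ℝ} {c : ℝ}
    (hg : ∀ᶠ t in nhds (0:ℝ), HasDerivAt g (g₁ t) t)
    (hg₁ : HasDerivAt g₁ c 0) (hmax : IsLocalMax g 0) : c ≤ 0 := by
  by_contra hc
  push_neg at hc
  have h0 : g₁ 0 = 0 := by
    exact ((hg.self_of_nhds).deriv).symm.trans hmax.deriv_eq_zero
  -- slope of g₁ tends to c > 0
  have hslope : Tendsto (fun t => g₁ t / t) (nhdsWithin 0 {(0:ℝ)}ᶜ) (nhds c) := by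
    have := hasDerivAt_iff_tendsto_slope.1 hg₁
    simpa [slope_fun_def, h0, div_eq_inv_mul] using this
  have hpos : ∀ᶠ t in nhdsWithin 0 {(0:ℝ)}ᶜ, 0 < g₁ t / t :=
    hslope.eventually (eventually_gt_nhds hc)
  have hall : ∀ᶠ t in nhds (0:ℝ), (t ≠ 0 → 0 < g₁ t / t) ∧ HasDerivAt g (g₁ t) t ∧ g t ≤ g 0 :=
    (eventually_nhdsWithin_iff.1 hpos).and (hg.and hmax)
  obtain ⟨ε, hε, hprop⟩ := Metric.eventually_nhds_iff.1 hall
  set b := ε / 2 with hb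
  have hbpos : 0 < b := by positivity
  have hmem : ∀ t ∈ Set.Icc (0:ℝ) b, dist t 0 < ε := by
    intro t ht
    rw [Real.dist_eq, sub_zero, _root_.abs_of_nonneg ht.1]
    linarith [ht.2]
  have hcont : ContinuousOn g (Set.Icc 0 b) := by
    intro t ht
    exact ((hprop (hmem t ht)).2.1.continuousAt).continuousWithinAt
  have hderiv : ∀ t ∈ Set.Ioo (0:ℝ) b, HasDerivAt g (g₁ t) t := by
    intro t ht
    exact (hprop (hmem t ⟨le_of_lt ht.1, le_of_lt ht.2⟩)).2.1
  obtain ⟨ξ, hξ, hξeq⟩ := exists_hasDerivAt_eq_slope g g₁ hbpos hcont hderiv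
  have hξpos : 0 < g₁ ξ := by
    have h1 := (hprop (hmem ξ ⟨le_of_lt hξ.1, le_of_lt hξ.2⟩)).1 (ne_of_gt hξ.1)
    have := mul_pos h1 hξ.1
    rwa [div_mul_cancel₀] at this
    exact ne_of_gt hξ.1
  have hgb : g b ≤ g 0 := (hprop (hmem b ⟨le_of_lt hbpos, le_rfl⟩)).2.2
  rw [hξeq, sub_zero] at hξpos
  have : 0 < g b - g 0 := by
    have := mul_pos hξpos hbpos
    rwa [div_mul_cancel₀ _ (ne_of_gt hbpos)] at this
  linarith


lemma lemB2 (f₁ f₂ : ℂ → ℝ) (U : Set ℂ) (hU : IsOpen U)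
    (h₁ : ContDiffOn ℝ 2 f₁ U) (h₂ : ContDiffOn ℝ 2 f₂ U) (z e : ℂ) (hz : z ∈ U)
    (hmax : IsLocalMax (fun ζ => f₁ ζ - f₂ ζ) z) :
    iteratedFDeriv ℝ 2 f₁ z ![e, e] ≤ iteratedFDeriv ℝ 2 f₂ z ![e, e] := by
  have hcurve : Continuous (fun t : ℝ => z + t • e) := by continuity
  have hnear : ∀ᶠ t in nhds (0:ℝ), z + t • e ∈ U := by
    have : Filter.Tendsto (fun t : ℝ => z + t • e) (nhds 0) (nhds z) := by
      have := hcurve.tendsto 0; simpa using this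
    exact this.eventually (hU.eventually_mem hz)
  have hg : ∀ᶠ t in nhds (0:ℝ), HasDerivAt
      (fun t => f₁ (z + t • e) - f₂ (z + t • e))
      (fderiv ℝ f₁ (z + t • e) e - fderiv ℝ f₂ (z + t • e) e) t := by
    filter_upwards [hnear] with t ht
    exact (lemA1 f₁ U hU h₁ z e t ht).sub (lemA1 f₂ U hU h₂ z e t ht)
  have hg₁ : HasDerivAt (fun t : ℝ => fderiv ℝ f₁ (z + t • e) e - fderiv ℝ f₂ (z + t • e) e)
      (iteratedFDeriv ℝ 2 f₁ z ![e, e] - iteratedFDeriv ℝ 2 f₂ z ![e, e]) 0 :=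
    (lemA2 f₁ U hU h₁ z e hz).sub (lemA2 f₂ U hU h₂ z e hz)
  have hmax' : IsLocalMax (fun t : ℝ => f₁ (z + t • e) - f₂ (z + t • e)) 0 := by
    have htend : Filter.Tendsto (fun t : ℝ => z + t • e) (nhds 0) (nhds z) := by
      have := hcurve.tendsto 0; simpa using this
    have := htend.eventually hmax
    simpa [IsLocalMax, IsMaxFilter] using this
  have := lemB1 hg hg₁ hmax'
  linarith

lemma lemA3 (f : ℂ → ℝ) (U : Set ℂ) (hU : IsOpen U) (hf : ContDiffOn ℝ 2 f U)
    (z e : ℂ) (hz : z ∈ U) (G : ℝ → ℝ) (m : ℝ)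
    (hG : ∀ᶠ t in nhds (0:ℝ), HasDerivAt (fun t : ℝ => f (z + t • e)) (G t) t)
    (hG' : HasDerivAt G m 0) :
    iteratedFDeriv ℝ 2 f z ![e, e] = m := by
  have hnear : ∀ᶠ t in nhds (0:ℝ), z + t • e ∈ U := by
    have hcurve : Continuous (fun t : ℝ => z + t • e) := by continuity
    have : Filter.Tendsto (fun t : ℝ => z + t • e) (nhds 0) (nhds z) := by
      have := hcurve.tendsto 0; simpa using this
    exact this.eventually (hU.eventually_mem hz)
  have heq : (fun t : ℝ => fderiv ℝ f (z + t • e) e) =ᶠ[nhds (0:ℝ)] G := by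
    filter_upwards [hnear, hG] with t ht hGt
    exact (lemA1 f U hU hf z e t ht).unique hGt
  have h2 : HasDerivAt G (iteratedFDeriv ℝ 2 f z ![e, e]) 0 :=
    (lemA2 f U hU hf z e hz).congr_of_eventuallyEq heq.symm
  exact h2.unique hG'

noncomputable def cb (s S : ℝ) : ℝ := Real.pi / (S - s)
noncomputable def Fb (s S t : ℝ) : ℝ :=
  Real.log (cb s S) - t - Real.log (Real.sin (cb s S * (t - s)))
noncomputable def F1b (s S t : ℝ) : ℝ :=
  -1 - cb s S * (Real.cos (cb s S * (t - s)) / Real.sin (cb s S * (t - s)))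
noncomputable def F2b (s S t : ℝ) : ℝ := cb s S ^ 2 / Real.sin (cb s S * (t - s)) ^ 2
noncomputable def Vb (s S : ℝ) (z : ℂ) : ℝ := Fb s S (Real.log (‖z‖))

lemma cb_pos {s S : ℝ} (h : s < S) : 0 < cb s S :=
  div_pos Real.pi_pos (by linarith)

lemma cb_mul_SS {s S : ℝ} (h : s < S) : cb s S * (S - s) = Real.pi := by
  rw [cb, div_mul_cancel₀ _ (ne_of_gt (by linarith : (0:ℝ) < S - s))]

lemma sin_cb_pos {s S t : ℝ} (h : s < S) (ht : t ∈ Set.Ioo s S) :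
    0 < Real.sin (cb s S * (t - s)) := by
  apply Real.sin_pos_of_pos_of_lt_pi
  · exact mul_pos (cb_pos h) (by linarith [ht.1])
  · calc cb s S * (t - s) < cb s S * (S - s) := by
          apply mul_lt_mul_of_pos_left _ (cb_pos h); linarith [ht.2]
    _ = Real.pi := cb_mul_SS h

lemma hasDerivAt_cbl (s S t : ℝ) :
    HasDerivAt (fun t : ℝ => cb s S * (t - s)) (cb s S) t := by
  simpa using ((hasDerivAt_id t).sub_const s).const_mul (cb s S)

lemma hasDerivAt_Fb {s S t : ℝ} (h : s < S) (ht : t ∈ Set.Ioo s S) :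
    HasDerivAt (Fb s S) (F1b s S t) t := by
  have hs := sin_cb_pos h ht
  have h2 : HasDerivAt (fun t : ℝ => Real.sin (cb s S * (t - s)))
      (Real.cos (cb s S * (t - s)) * cb s S) t :=
    (Real.hasDerivAt_sin _).comp t (hasDerivAt_cbl s S t)
  have h3 := (Real.hasDerivAt_log (ne_of_gt hs)).comp t h2
  have h4 := ((hasDerivAt_const t (Real.log (cb s S))).sub (hasDerivAt_id t)).sub h3
  refine h4.congr_deriv (Eq.symm ?_)
  rw [F1b]
  have hs' : Real.sin (cb s S * (t - s)) ≠ 0 := ne_of_gt hs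
  field_simp
  ring

lemma hasDerivAt_F1b {s S t : ℝ} (h : s < S) (ht : t ∈ Set.Ioo s S) :
    HasDerivAt (F1b s S) (F2b s S t) t := by
  have hs := sin_cb_pos h ht
  have h2 : HasDerivAt (fun t : ℝ => Real.sin (cb s S * (t - s)))
      (Real.cos (cb s S * (t - s)) * cb s S) t :=
    (Real.hasDerivAt_sin _).comp t (hasDerivAt_cbl s S t)
  have hcos : HasDerivAt (fun t : ℝ => Real.cos (cb s S * (t - s)))
      (-Real.sin (cb s S * (t - s)) * cb s S) t :=
    (Real.hasDerivAt_cos _).comp t (hasDerivAt_cbl s S t)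
  have hdiv := hcos.div h2 (ne_of_gt hs)
  have h5 := (hasDerivAt_const t (-1:ℝ)).sub (hdiv.const_mul (cb s S))
  refine h5.congr_deriv (Eq.symm ?_)
  rw [F2b]
  have hpyth := Real.sin_sq_add_cos_sq (cb s S * (t - s))
  have hs' : Real.sin (cb s S * (t - s)) ≠ 0 := ne_of_gt hs
  field_simp
  nlinarith [hpyth]

lemma F2b_eq {s S t : ℝ} (h : s < S) (ht : t ∈ Set.Ioo s S) :
    F2b s S t = Real.exp (2 * Fb s S t) * Real.exp t ^ 2 := by
  have hs := sin_cb_pos h ht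
  have h1 : Real.exp (Fb s S t) = cb s S / (Real.exp t * Real.sin (cb s S * (t - s))) := by
    rw [Fb, Real.exp_sub, Real.exp_sub, Real.exp_log (cb_pos h), Real.exp_log hs]
    ring
  have h2 : Real.exp (2 * Fb s S t) = (Real.exp (Fb s S t))^2 := by
    rw [two_mul, Real.exp_add, sq]
  rw [F2b, h2, h1]
  have he := Real.exp_ne_zero t
  field_simp

def Ann (s S : ℝ) : Set ℂ := {z | Real.exp s < ‖z‖ ∧ ‖z‖ < Real.exp S}

lemma isOpen_Ann (s S : ℝ) : IsOpen (Ann s S) := by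
  have : Ann s S = (fun z : ℂ => ‖z‖) ⁻¹' (Set.Ioo (Real.exp s) (Real.exp S)) := rfl
  rw [this]
  exact isOpen_Ioo.preimage continuous_norm

lemma abs_pos_of_mem {s S : ℝ} {w : ℂ} (hw : w ∈ Ann s S) : 0 < ‖w‖ :=
  lt_trans (Real.exp_pos s) hw.1

lemma ne_zero_of_mem {s S : ℝ} {w : ℂ} (hw : w ∈ Ann s S) : w ≠ 0 := by
  intro h0
  have := abs_pos_of_mem hw
  rw [h0, norm_zero] at this
  exact lt_irrefl 0 this

lemma lognormSq (w : ℂ) : Real.log (Complex.normSq w) / 2 = Real.log (‖w‖) := by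
  rw [Complex.norm_def, Real.log_sqrt (Complex.normSq_nonneg w)]

lemma log_mem_Ioo {s S : ℝ} {w : ℂ} (hw : w ∈ Ann s S) :
    Real.log (Complex.normSq w) / 2 ∈ Set.Ioo s S := by
  have h0 := abs_pos_of_mem hw
  rw [lognormSq w]
  exact ⟨(Real.lt_log_iff_exp_lt h0).2 hw.1, (Real.log_lt_iff_lt_exp h0).2 hw.2⟩

lemma Vb_eq' (s S : ℝ) (w : ℂ) : Vb s S w = Fb s S (Real.log (Complex.normSq w) / 2) := by
  rw [Vb, lognormSq]

lemma contDiff_normSq : ContDiff ℝ 2 (Complex.normSq : ℂ → ℝ) := by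
  have hre : ContDiff ℝ 2 (fun z : ℂ => z.re) := Complex.reCLM.contDiff
  have him : ContDiff ℝ 2 (fun z : ℂ => z.im) := Complex.imCLM.contDiff
  have : (Complex.normSq : ℂ → ℝ) = fun z => z.re * z.re + z.im * z.im :=
    funext fun z => Complex.normSq_apply z
  rw [this]
  exact (hre.mul hre).add (him.mul him)

lemma contDiffAt_Fb {s S τ : ℝ} (h : s < S) (hτ : τ ∈ Set.Ioo s S) :
    ContDiffAt ℝ 2 (Fb s S) τ := by
  have hsin : Real.sin (cb s S * (τ - s)) ≠ 0 := ne_of_gt (sin_cb_pos h hτ)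
  have h1 : ContDiffAt ℝ 2 (fun t : ℝ => cb s S * (t - s)) τ :=
    contDiffAt_const.mul (contDiffAt_id.sub contDiffAt_const)
  have h2 : ContDiffAt ℝ 2 (fun t : ℝ => Real.sin (cb s S * (t - s))) τ :=
    Real.contDiff_sin.contDiffAt.comp τ h1
  have h3 : ContDiffAt ℝ 2 (fun t : ℝ => Real.log (Real.sin (cb s S * (t - s)))) τ :=
    ContDiffAt.comp (g := Real.log) τ (Real.contDiffAt_log.mpr hsin) h2
  exact (contDiffAt_const.sub contDiffAt_id).sub h3

lemma contDiffOn_Vb {s S : ℝ} (h : s < S) : ContDiffOn ℝ 2 (Vb s S) (Ann s S) := by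
  intro z hz
  apply ContDiffAt.contDiffWithinAt
  have hρ : 0 < Complex.normSq z := Complex.normSq_pos.mpr (ne_zero_of_mem hz)
  have hinner : ContDiffAt ℝ 2 (fun w : ℂ => Real.log (Complex.normSq w) / 2) z :=
    ((Real.contDiffAt_log.mpr (ne_of_gt hρ)).comp z contDiff_normSq.contDiffAt).div_const 2
  have hF := contDiffAt_Fb h (log_mem_Ioo hz)
  have : Vb s S = fun w => Fb s S (Real.log (Complex.normSq w) / 2) :=
    funext fun w => Vb_eq' s S w
  rw [this]
  exact hF.comp z hinner

lemma iFD_Vb_line {s S : ℝ} (h : s < S) {z : ℂ} (hz : z ∈ Ann s S) (e : ℂ) (p q : ℝ)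
    (hums : ∀ t : ℝ, Complex.normSq (z + t • e) = (p + t) ^ 2 + q ^ 2) :
    iteratedFDeriv ℝ 2 (Vb s S) z ![e, e]
      = F2b s S (Real.log (Complex.normSq z) / 2) * (p / Complex.normSq z) ^ 2
        + F1b s S (Real.log (Complex.normSq z) / 2)
          * ((q ^ 2 - p ^ 2) / Complex.normSq z ^ 2) := by
  have hums0 : p ^ 2 + q ^ 2 = Complex.normSq z := by
    have := hums 0; simpa using this.symm
  have hρ0 : 0 < (p:ℝ) ^ 2 + q ^ 2 := by
    rw [hums0]; exact Complex.normSq_pos.mpr (ne_zero_of_mem hz)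
  have hτ0 : Real.log ((p:ℝ) ^ 2 + q ^ 2) / 2 ∈ Set.Ioo s S := by
    rw [hums0]; exact log_mem_Ioo hz
  -- derivative of t ↦ (p+t)^2 + q^2
  have hρ' : ∀ t : ℝ, HasDerivAt (fun t : ℝ => (p + t) ^ 2 + q ^ 2) (2 * (p + t)) t := by
    intro t
    simpa using (((hasDerivAt_id t).const_add p).pow 2).add_const (q ^ 2)
  have hℓ : ∀ t : ℝ, 0 < (p + t) ^ 2 + q ^ 2 →
      HasDerivAt (fun t : ℝ => Real.log ((p + t) ^ 2 + q ^ 2) / 2)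
        ((p + t) / ((p + t) ^ 2 + q ^ 2)) t := by
    intro t hpos
    have := ((Real.hasDerivAt_log (ne_of_gt hpos)).comp t (hρ' t)).div_const 2
    refine this.congr_deriv (Eq.symm ?_)
    field_simp
  apply lemA3 (Vb s S) (Ann s S) (isOpen_Ann s S) (contDiffOn_Vb h) z e hz
      (fun t => F1b s S (Real.log ((p + t) ^ 2 + q ^ 2) / 2)
        * ((p + t) / ((p + t) ^ 2 + q ^ 2)))
  · -- eventual derivative along the line
    have hnear : ∀ᶠ t in nhds (0:ℝ), z + t • e ∈ Ann s S := by
      have hcurve : Continuous (fun t : ℝ => z + t • e) := by continuity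
      have htend : Filter.Tendsto (fun t : ℝ => z + t • e) (nhds 0) (nhds z) := by
        have := hcurve.tendsto 0; simpa using this
      exact htend.eventually ((isOpen_Ann s S).eventually_mem hz)
    filter_upwards [hnear] with t ht
    have hpos : 0 < (p + t) ^ 2 + q ^ 2 := by
      rw [← hums t]; exact Complex.normSq_pos.mpr (ne_zero_of_mem ht)
    have hτt : Real.log ((p + t) ^ 2 + q ^ 2) / 2 ∈ Set.Ioo s S := by
      rw [← hums t]; exact log_mem_Ioo ht
    have hfun : (fun t : ℝ => Vb s S (z + t • e))
        = fun t : ℝ => Fb s S (Real.log ((p + t) ^ 2 + q ^ 2) / 2) := by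
      funext u; rw [Vb_eq', hums u]
    rw [hfun]
    exact (hasDerivAt_Fb h hτt).comp t (hℓ t hpos)
  · -- derivative of the derivative at 0
    have hF1 : HasDerivAt (fun t : ℝ => F1b s S (Real.log ((p + t) ^ 2 + q ^ 2) / 2))
        (F2b s S (Real.log ((p + 0) ^ 2 + q ^ 2) / 2) * ((p + 0) / ((p + 0) ^ 2 + q ^ 2))) 0 := by
      have hpos : 0 < (p + 0) ^ 2 + q ^ 2 := by simpa using hρ0
      have hτ : Real.log ((p + 0) ^ 2 + q ^ 2) / 2 ∈ Set.Ioo s S := by simpa using hτ0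
      have := (hasDerivAt_F1b h hτ).comp 0 (hℓ 0 hpos); exact this
    have hu : HasDerivAt (fun t : ℝ => (p + t) / ((p + t) ^ 2 + q ^ 2))
        ((1 * ((p + 0) ^ 2 + q ^ 2) - (p + 0) * (2 * (p + 0))) / ((p + 0) ^ 2 + q ^ 2) ^ 2) 0 := by
      have hpos : ((p + (0:ℝ)) ^ 2 + q ^ 2) ≠ 0 := by
        simpa using ne_of_gt hρ0
      exact ((hasDerivAt_id 0).const_add p).div (hρ' 0) hpos
    have := hF1.mul hu
    refine this.congr_deriv (Eq.symm ?_)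
    simp only [add_zero]
    rw [hums0]
    have hρ : (0:ℝ) < Complex.normSq z := by rw [← hums0]; exact hρ0
    have hq : q ^ 2 = Complex.normSq z - p ^ 2 := by rw [← hums0]; ring
    field_simp
    linear_combination (F1b s S (Real.log (Complex.normSq z) / 2)) * hq

lemma lap_Vb {s S : ℝ} (h : s < S) {z : ℂ} (hz : z ∈ Ann s S) :
    lap (Vb s S) z = Real.exp (2 * Vb s S z) := by
  have hρ : 0 < Complex.normSq z := Complex.normSq_pos.mpr (ne_zero_of_mem hz)
  have hτ := log_mem_Ioo hz
  have h1 := iFD_Vb_line h hz 1 z.re z.im (by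
    intro t
    simp [Complex.normSq_apply, Complex.add_re, Complex.add_im, Complex.real_smul]
    ring)
  have h2 := iFD_Vb_line h hz Complex.I z.im z.re (by
    intro t
    simp [Complex.normSq_apply, Complex.add_re, Complex.add_im, Complex.real_smul]
    ring)
  have hρdef : Complex.normSq z = z.re ^ 2 + z.im ^ 2 := by
    rw [Complex.normSq_apply]; ring
  have hexp : Real.exp (Real.log (Complex.normSq z) / 2) ^ 2 = Complex.normSq z := by
    rw [sq, ← Real.exp_add]
    have : Real.log (Complex.normSq z) / 2 + Real.log (Complex.normSq z) / 2
        = Real.log (Complex.normSq z) := by ring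
    rw [this, Real.exp_log hρ]
  have hF2 := F2b_eq h hτ
  have hVz : Vb s S z = Fb s S (Real.log (Complex.normSq z) / 2) := Vb_eq' s S z
  rw [lap, h1, h2, hVz]
  rw [hF2, hexp]
  field_simp
  linear_combination (-(Real.exp (2 * Fb s S (Real.log (Complex.normSq z) / 2))) * Complex.normSq z) * hρdef

lemma Fb_ge₁ {s S t : ℝ} (h : s < S) (ht : t ∈ Set.Ioo s S) :
    -t - Real.log (t - s) ≤ Fb s S t := by
  have hsin := sin_cb_pos h ht
  have hts : 0 < t - s := by linarith [ht.1]
  have hc := cb_pos h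
  have h1 : Real.sin (cb s S * (t - s)) ≤ cb s S * (t - s) :=
    Real.sin_le (le_of_lt (mul_pos hc hts))
  have h2 : Real.log (Real.sin (cb s S * (t - s))) ≤ Real.log (cb s S * (t - s)) :=
    Real.log_le_log hsin h1
  rw [Real.log_mul (ne_of_gt hc) (ne_of_gt hts)] at h2
  rw [Fb]
  linarith

lemma Fb_ge₂ {s S t : ℝ} (h : s < S) (ht : t ∈ Set.Ioo s S) :
    -t - Real.log (S - t) ≤ Fb s S t := by
  have hsin := sin_cb_pos h ht
  have hts : 0 < S - t := by linarith [ht.2]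
  have hc := cb_pos h
  have hid : cb s S * (S - t) = Real.pi - cb s S * (t - s) := by
    rw [← cb_mul_SS h]; ring
  have hsym : Real.sin (cb s S * (t - s)) = Real.sin (cb s S * (S - t)) := by
    rw [hid, Real.sin_pi_sub]
  have h1 : Real.sin (cb s S * (S - t)) ≤ cb s S * (S - t) :=
    Real.sin_le (le_of_lt (mul_pos hc hts))
  have h2 : Real.log (Real.sin (cb s S * (t - s))) ≤ Real.log (cb s S * (S - t)) := by
    rw [hsym]; exact Real.log_le_log (hsym ▸ hsin) h1
  rw [Real.log_mul (ne_of_gt hc) (ne_of_gt hts)] at h2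
  rw [Fb]
  linarith

lemma log_abs_mem_Ioo {s S : ℝ} {w : ℂ} (hw : w ∈ Ann s S) :
    Real.log (‖w‖) ∈ Set.Ioo s S := by
  have := log_mem_Ioo hw
  rwa [lognormSq] at this

lemma key_ineq (a : ℂ → ℝ)
    (ha : ContDiffOn ℝ 2 a (ball (0:ℂ) 1 \ {0}))
    (hK : ∀ z ∈ ball (0:ℂ) 1 \ {0}, Real.exp (2 * a z) ≤ lap a z)
    (s S : ℝ) (hS : S < 0) (z₀ : ℂ) (hz₀ : z₀ ∈ Ann s S) :
    a z₀ ≤ Vb s S z₀ := by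
  have hsS : s < S := by
    have := lt_trans hz₀.1 hz₀.2
    exact Real.exp_lt_exp.1 this
  have hUsub : Ann s S ⊆ ball (0:ℂ) 1 \ {0} := by
    intro z hz
    refine ⟨?_, ?_⟩
    · rw [mem_ball_zero_iff]
      calc ‖z‖ = ‖z‖ := rfl
      _ < Real.exp S := hz.2
      _ < 1 := by rw [← Real.exp_zero]; exact Real.exp_lt_exp.2 hS
    · simpa using ne_zero_of_mem hz
  set K : Set ℂ := closedBall (0:ℂ) (Real.exp S) \ ball 0 (Real.exp s) with hKdef
  have hKcomp : IsCompact K := (isCompact_closedBall 0 _).diff isOpen_ball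
  have hKsub : K ⊆ ball (0:ℂ) 1 \ {0} := by
    intro z hz
    have h1 : ‖z‖ ≤ Real.exp S := by
      have := hz.1; rwa [mem_closedBall_zero_iff] at this
    have h2 : Real.exp s ≤ ‖z‖ := by
      have := hz.2; rw [mem_ball_zero_iff] at this; exact le_of_not_gt this
    constructor
    · rw [mem_ball_zero_iff]
      calc ‖z‖ = ‖z‖ := rfl
      _ ≤ Real.exp S := h1
      _ < 1 := by rw [← Real.exp_zero]; exact Real.exp_lt_exp.2 hS
    · simp only [mem_singleton_iff]
      intro h0
      rw [h0, norm_zero] at h2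
      exact absurd h2 (not_le.2 (Real.exp_pos s))
  have hAnnK : Ann s S ⊆ K := by
    intro z hz
    constructor
    · rw [mem_closedBall_zero_iff]; exact le_of_lt hz.2
    · rw [mem_ball_zero_iff]; exact not_lt.2 (le_of_lt hz.1)
  obtain ⟨M, hM⟩ := hKcomp.exists_bound_of_continuousOn ((ha.continuousOn).mono hKsub)
  have hMle : ∀ z ∈ K, a z ≤ M := by
    intro z hz
    have := hM z hz
    rw [Real.norm_eq_abs] at this
    exact (abs_le.1 this).2
  set w : ℂ → ℝ := fun z => a z - Vb s S z with hwdef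
  set B : ℝ := w z₀ with hBdef
  set C : ℝ := M - B with hCdef
  set δ : ℝ := Real.exp (-S - C) with hδdef
  have hδpos : 0 < δ := Real.exp_pos _
  set K₂ : Set ℂ := closedBall (0:ℂ) (Real.exp (S - δ)) \ ball 0 (Real.exp (s + δ)) with hK₂def
  have hK₂comp : IsCompact K₂ := (isCompact_closedBall 0 _).diff isOpen_ball
  have hK₂Ann : K₂ ⊆ Ann s S := by
    intro z hz
    have h1 : ‖z‖ ≤ Real.exp (S - δ) := by
      have := hz.1; rwa [mem_closedBall_zero_iff] at this
    have h2 : Real.exp (s + δ) ≤ ‖z‖ := by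
      have := hz.2; rw [mem_ball_zero_iff] at this; exact le_of_not_gt this
    constructor
    · calc Real.exp s < Real.exp (s + δ) := Real.exp_lt_exp.2 (by linarith)
      _ ≤ ‖z‖ := h2
    · calc ‖z‖ ≤ Real.exp (S - δ) := h1
      _ < Real.exp S := Real.exp_lt_exp.2 (by linarith)
  -- every point of the annulus where w ≥ B lies in K₂
  have hsub : ∀ z ∈ Ann s S, B ≤ w z → z ∈ K₂ := by
    intro z hz hBz
    have htmem := log_abs_mem_Ioo hz
    set t : ℝ := Real.log (‖z‖) with htdef
    have haM : a z ≤ M := hMle z (hAnnK hz)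
    have hFC : Fb s S t ≤ C := by
      have : Vb s S z = Fb s S t := rfl
      have := hBz
      simp only [hwdef] at this
      rw [hCdef]
      have hV : Vb s S z = Fb s S t := rfl
      linarith [hV ▸ this]
    have hb1 := Fb_ge₁ hsS htmem
    have hb2 := Fb_ge₂ hsS htmem
    have hts : 0 < t - s := by linarith [htmem.1]
    have hSt : 0 < S - t := by linarith [htmem.2]
    have hlog1 : -S - C < Real.log (t - s) := by linarith [htmem.2]
    have hlog2 : -S - C < Real.log (S - t) := by linarith [htmem.2]
    have ht1 : δ < t - s := by
      have := Real.exp_lt_exp.2 hlog1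
      rwa [Real.exp_log hts] at this
    have ht2 : δ < S - t := by
      have := Real.exp_lt_exp.2 hlog2
      rwa [Real.exp_log hSt] at this
    have habs : ‖z‖ = Real.exp t := (Real.exp_log (abs_pos_of_mem hz)).symm
    constructor
    · rw [mem_closedBall_zero_iff]
      calc ‖z‖ = ‖z‖ := rfl
      _ = Real.exp t := habs
      _ ≤ Real.exp (S - δ) := Real.exp_le_exp.2 (by linarith)
    · rw [mem_ball_zero_iff]
      apply not_lt.2
      calc Real.exp (s + δ) ≤ Real.exp t := Real.exp_le_exp.2 (by linarith)
      _ = ‖z‖ := habs.symm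
  have hwcd : ContDiffOn ℝ 2 w (Ann s S) := (ha.mono hUsub).sub (contDiffOn_Vb hsS)
  set T : Set ℂ := K₂ ∩ w ⁻¹' (Ici B) with hTdef
  have hTK₂ : T ⊆ K₂ := inter_subset_left
  have hTclosed : IsClosed T := by
    apply ContinuousOn.preimage_isClosed_of_isClosed
        (hwcd.continuousOn.mono hK₂Ann) hK₂comp.isClosed isClosed_Ici
  have hTcomp : IsCompact T := hK₂comp.of_isClosed_subset hTclosed hTK₂
  have hz₀T : z₀ ∈ T := by
    refine ⟨hsub z₀ hz₀ le_rfl, ?_⟩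
    simp only [mem_preimage, mem_Ici, hBdef]
    exact le_rfl
  obtain ⟨zs, hzsT, hzsmax⟩ :=
    hTcomp.exists_isMaxOn ⟨z₀, hz₀T⟩ (hwcd.continuousOn.mono (fun z hz => hK₂Ann (hTK₂ hz)))
  have hzsAnn : zs ∈ Ann s S := hK₂Ann (hTK₂ hzsT)
  have hglobal : ∀ z ∈ Ann s S, w z ≤ w zs := by
    intro z hz
    by_cases hBz : B ≤ w z
    · exact hzsmax ⟨hsub z hz hBz, hBz⟩
    · push_neg at hBz
      calc w z ≤ B := le_of_lt hBz
      _ ≤ w zs := hzsT.2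
  have hmaxon : IsMaxOn w (Ann s S) zs := fun z hz => hglobal z hz
  have hlocmax : IsLocalMax w zs := hmaxon.isLocalMax ((isOpen_Ann s S).mem_nhds hzsAnn)
  have hVcd := contDiffOn_Vb (s := s) (S := S) hsS
  have hle1 := lemB2 a (Vb s S) (Ann s S) (isOpen_Ann s S) (ha.mono hUsub) hVcd zs 1
    hzsAnn hlocmax
  have hle2 := lemB2 a (Vb s S) (Ann s S) (isOpen_Ann s S) (ha.mono hUsub) hVcd zs Complex.I
    hzsAnn hlocmax
  have hlapV := lap_Vb hsS hzsAnn
  have hKzs := hK zs (hUsub hzsAnn)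
  have hlap_le : lap a zs ≤ lap (Vb s S) zs := by
    rw [lap, lap]; linarith
  have hexp_le : Real.exp (2 * a zs) ≤ Real.exp (2 * Vb s S zs) := by
    calc Real.exp (2 * a zs) ≤ lap a zs := hKzs
    _ ≤ lap (Vb s S) zs := hlap_le
    _ = Real.exp (2 * Vb s S zs) := hlapV
  have hazs : a zs ≤ Vb s S zs := by
    have := Real.exp_le_exp.1 hexp_le
    linarith
  have h1 : a z₀ - Vb s S z₀ ≤ a zs - Vb s S zs := hglobal z₀ hz₀
  linarith

theorem stmt0_aux (a : ℂ → ℝ)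
    (ha : ContDiffOn ℝ (⊤ : ℕ∞) a (ball (0:ℂ) 1 \ {0}))
    (hK : ∀ z ∈ ball (0:ℂ) 1 \ {0}, Real.exp (2 * a z) ≤ lap a z) :
    ∀ z ∈ ball (0:ℂ) 1 \ {0},
      a z ≤ -Real.log (‖z‖ * (-Real.log (‖z‖))) := by
  intro z₀ hz₀
  have ha2 : ContDiffOn ℝ 2 a (ball (0:ℂ) 1 \ {0}) := ha.of_le (WithTop.coe_le_coe.2 le_top)
  have hne : z₀ ≠ 0 := by simpa using hz₀.2
  have habs0 : 0 < ‖z₀‖ := norm_pos_iff.mpr hne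
  have habs1 : ‖z₀‖ < 1 := by
    have := hz₀.1; rwa [mem_ball_zero_iff] at this
  set t₀ := Real.log (‖z₀‖) with ht₀
  have ht₀neg : t₀ < 0 := Real.log_neg habs0 habs1
  have step1 : ∀ S, t₀ < S → S < 0 → ∀ s, s < t₀ → a z₀ ≤ Fb s S t₀ := by
    intro S hS1 hS0 s hs
    have hz₀A : z₀ ∈ Ann s S := by
      constructor
      · have h := Real.exp_lt_exp.2 hs
        rwa [ht₀, Real.exp_log habs0] at h
      · have h := Real.exp_lt_exp.2 hS1
        rwa [ht₀, Real.exp_log habs0] at h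
    have hk := key_ineq a ha2 hK s S hS0 z₀ hz₀A
    have h2 : Vb s S z₀ = Fb s S t₀ := by rw [ht₀]; rfl
    rwa [h2] at hk
  have step2 : ∀ S, t₀ < S → S < 0 → a z₀ ≤ -t₀ - Real.log (S - t₀) := by
    intro S hS1 hS0
    set KK := S - t₀ with hKK
    have hKKpos : 0 < KK := by rw [hKK]; linarith
    have h1 : Tendsto (fun s : ℝ => S - s) atBot atTop := by
      simpa [sub_eq_add_neg] using tendsto_atTop_add_const_left atBot S
        (tendsto_neg_atBot_atTop : Tendsto (fun s : ℝ => -s) atBot atTop)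
    have h2 : Tendsto (fun s : ℝ => Real.pi / (S - s)) atBot (nhds 0) :=
      Filter.Tendsto.div_atTop tendsto_const_nhds h1
    have hc0 : Tendsto (fun s => cb s S) atBot (nhdsWithin 0 (Set.Ioi 0)) := by
      rw [tendsto_nhdsWithin_iff]
      refine ⟨by simpa [cb] using h2, ?_⟩
      filter_upwards [eventually_lt_atBot S] with s hs
      exact cb_pos hs
    have hd : HasDerivAt (fun x : ℝ => Real.sin (x * KK)) KK 0 := by
      have := (Real.hasDerivAt_sin ((0:ℝ) * KK)).comp 0 ((hasDerivAt_id (0:ℝ)).mul_const KK)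
      simp at this; exact this
    have hsin : Tendsto (fun x : ℝ => Real.sin (x * KK) / x)
        (nhdsWithin 0 {(0:ℝ)}ᶜ) (nhds KK) := by
      have := hasDerivAt_iff_tendsto_slope.1 hd
      simpa [slope_fun_def, div_eq_inv_mul] using this
    have hsin' : Tendsto (fun x : ℝ => Real.sin (x * KK) / x)
        (nhdsWithin 0 (Set.Ioi 0)) (nhds KK) :=
      hsin.mono_left (nhdsWithin_mono 0 (fun x hx => ne_of_gt hx))
    have hcomp : Tendsto (fun s => Real.sin (cb s S * KK) / cb s S) atBot (nhds KK) :=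
      hsin'.comp hc0
    have hlog : Tendsto (fun s => Real.log (Real.sin (cb s S * KK) / cb s S)) atBot
        (nhds (Real.log KK)) :=
      (Real.continuousAt_log (ne_of_gt hKKpos)).tendsto.comp hcomp
    have hfinal : Tendsto (fun s => -Real.log (Real.sin (cb s S * KK) / cb s S) - t₀) atBot
        (nhds (-Real.log KK - t₀)) := hlog.neg.sub_const t₀
    have hcongr : ∀ᶠ s in atBot, -Real.log (Real.sin (cb s S * KK) / cb s S) - t₀
        = Fb s S t₀ := by
      filter_upwards [eventually_lt_atBot t₀] with s hs
      have hsS : s < S := lt_trans hs hS1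
      have hmem : t₀ ∈ Set.Ioo s S := ⟨hs, hS1⟩
      have hsinpos := sin_cb_pos hsS hmem
      have hid : cb s S * KK = Real.pi - cb s S * (t₀ - s) := by
        rw [hKK, ← cb_mul_SS hsS]; ring
      have hsym : Real.sin (cb s S * KK) = Real.sin (cb s S * (t₀ - s)) := by
        rw [hid, Real.sin_pi_sub]
      rw [Fb, hsym, Real.log_div (ne_of_gt hsinpos) (ne_of_gt (cb_pos hsS))]
      ring
    have htend : Tendsto (fun s => Fb s S t₀) atBot (nhds (-Real.log KK - t₀)) :=
      hfinal.congr' hcongr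
    have hev : ∀ᶠ s in atBot, a z₀ ≤ Fb s S t₀ := by
      filter_upwards [eventually_lt_atBot t₀] with s hs
      exact step1 S hS1 hS0 s hs
    have := ge_of_tendsto htend hev
    rw [hKK] at this
    linarith
  -- let S → 0⁻
  have hmt₀ : (0:ℝ) < -t₀ := by linarith
  have h1 : Tendsto (fun S : ℝ => S - t₀) (nhdsWithin 0 (Set.Iio 0)) (nhds (-t₀)) := by
    have hc : Tendsto (fun S : ℝ => S - t₀) (nhds 0) (nhds (0 - t₀)) :=
      (continuous_id.sub continuous_const).tendsto 0
    rw [zero_sub] at hc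
    exact hc.mono_left nhdsWithin_le_nhds
  have hlog2 : Tendsto (fun S : ℝ => Real.log (S - t₀)) (nhdsWithin 0 (Set.Iio 0))
      (nhds (Real.log (-t₀))) :=
    (Real.continuousAt_log (ne_of_gt hmt₀)).tendsto.comp h1
  have hlim2 : Tendsto (fun S : ℝ => -t₀ - Real.log (S - t₀)) (nhdsWithin 0 (Set.Iio 0))
      (nhds (-t₀ - Real.log (-t₀))) := hlog2.const_sub (-t₀)
  have hev2 : ∀ᶠ S in nhdsWithin 0 (Set.Iio 0), a z₀ ≤ -t₀ - Real.log (S - t₀) := by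
    filter_upwards [Ioo_mem_nhdsLT_of_mem (⟨ht₀neg, le_refl (0:ℝ)⟩ : (0:ℝ) ∈ Set.Ioc t₀ 0)]
      with S hS
    exact step2 S hS.1 hS.2
  have hfin : a z₀ ≤ -t₀ - Real.log (-t₀) := ge_of_tendsto hlim2 hev2
  have hlogne : Real.log (‖z₀‖) ≠ 0 := ne_of_lt ht₀neg
  have hgoal : -Real.log (‖z₀‖ * -Real.log (‖z₀‖))
      = -t₀ - Real.log (-t₀) := by
    rw [Real.log_mul (ne_of_gt habs0) (neg_ne_zero.2 hlogne), ← ht₀]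
    ring
  rw [hgoal]
  exact hfin


/-- if `e^{2a}|dz|²` has Gauss curvature at most `-1` on the punctured unit
disc (i.e. `Δa ≥ e^{2a}`), then `a(z) ≤ -ln(|z|·(-ln|z|))`, i.e. the metric lies below the
complete hyperbolic metric `H = [|z| ln |z|]^{-2}|dz|²`. -/
theorem stmt0 (a : ℂ → ℝ)
    (ha : ContDiffOn ℝ (⊤ : ℕ∞) a (ball (0:ℂ) 1 \ {0}))
    (hK : ∀ z ∈ ball (0:ℂ) 1 \ {0}, Real.exp (2 * a z) ≤ lap a z) :
    ∀ z ∈ ball (0:ℂ) 1 \ {0},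
      a z ≤ -Real.log (‖z‖ * (-Real.log (‖z‖))) :=
  stmt0_aux a ha hK
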